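/- arXiv:1504.08327 — 6 statements merged into one kernel-verified Lean document; each statement's English description precedes it below -/
import Mathlib

section
/- Let λ > 0, c > 0. For any d_x > 0, the spatial autocorrelation of the canonical OU∧ process equals exp(-λ d_x / c). Equivalently, with t* = t - d_x/(2c), ∫_{-∞}^{t*} (2c(t-s) - d_x) exp(-2λ(t-s)) ds divided by ∫_{-∞}^{t} 2c(t-s) exp(-2λ(t-s)) ds equals exp(-λ d_x / c). -/
open MeasureTheory Real Set

/-
Both integrands are `2c (t* - s) e^{-2λ(t-s)}` over `s ≤ t*`, with `t* = t - d_x/(2c)` for the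
numerator and `t* = t` for the denominator. Factoring `e^{-2λ(t-s)} = e^{-2λ(t-t*)} e^{-2λ(t*-s)}`
and substituting `u = t* - s` leaves the same Gamma integral `∫₀^∞ u e^{-2λu} du = 1/(2λ)²` in both,
so the ratio is `e^{-2λ(t - t*)} = e^{-λ d_x / c}`.
-/

theorem setIntegral_Iic_comp_sub_left {E : Type*} [NormedAddCommGroup E] [NormedSpace ℝ E]
    (f : ℝ → E) (t a : ℝ) : ∫ s in Iic a, f (t - s) = ∫ u in Ioi (t - a), f u := by
  have hemb : MeasurableEmbedding (fun s : ℝ => t - s) :=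
    (MeasurableEquiv.subLeft t).measurableEmbedding
  have h := hemb.setIntegral_map (μ := volume) f (Ici (t - a))
  rw [Measure.map_sub_left_eq_self (volume : Measure ℝ) t] at h
  have hpre : (fun s : ℝ => t - s) ⁻¹' Ici (t - a) = Iic a := by
    ext s; simp
  rw [hpre] at h
  rw [← integral_Ici_eq_integral_Ioi, h]

theorem integral_Ioi_mul_exp_neg_mul {k : ℝ} (hk : 0 < k) :
    ∫ u in Ioi (0 : ℝ), u * exp (-(k * u)) = 1 / k ^ 2 := by
  have h := integral_rpow_mul_exp_neg_mul_Ioi two_pos hk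
  simpa only [show (2 : ℝ) - 1 = 1 by norm_num, rpow_one, rpow_two, Gamma_two, mul_one,
    one_div_pow] using h

theorem integral_Iic_sub_mul_exp_neg_mul_sub {k : ℝ} (hk : 0 < k) (b t : ℝ) :
    ∫ s in Iic b, (b - s) * exp (-(k * (t - s))) = exp (-(k * (t - b))) / k ^ 2 := by
  have hsplit : ∀ s : ℝ, (b - s) * exp (-(k * (t - s)))
      = exp (-(k * (t - b))) * ((b - s) * exp (-(k * (b - s)))) := fun s => by
    rw [mul_left_comm, ← exp_add]
    ring_nf
  simp_rw [hsplit]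
  rw [integral_const_mul, setIntegral_Iic_comp_sub_left (fun u => u * exp (-(k * u))), sub_self,
    integral_Ioi_mul_exp_neg_mul hk, mul_one_div]

theorem canonical_OUwedge_spatial_autocorrelation_general
    (lam c t d_x : ℝ) (hlam : 0 < lam) (hc : 0 < c) :
    (∫ s in Set.Iic (t - d_x / (2 * c)),
        (2 * c * (t - s) - d_x) * Real.exp (-(2 * lam * (t - s)))) /
      (∫ s in Set.Iic t, 2 * c * (t - s) * Real.exp (-(2 * lam * (t - s))))
    = Real.exp (-(lam * d_x / c)) := by
  have hk : 0 < 2 * lam := by positivity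
  have hnum : ∀ s, (2 * c * (t - s) - d_x) * exp (-(2 * lam * (t - s)))
      = 2 * c * ((t - d_x / (2 * c) - s) * exp (-(2 * lam * (t - s)))) := fun s => by
    field_simp
    ring
  have hden : ∀ s, 2 * c * (t - s) * exp (-(2 * lam * (t - s)))
      = 2 * c * ((t - s) * exp (-(2 * lam * (t - s)))) := fun s => by ring
  simp_rw [hnum, hden]
  rw [integral_const_mul, integral_const_mul, integral_Iic_sub_mul_exp_neg_mul_sub hk,
    integral_Iic_sub_mul_exp_neg_mul_sub hk, sub_self, mul_zero, neg_zero, exp_zero]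
  have hexp : 2 * lam * (t - (t - d_x / (2 * c))) = lam * d_x / c := by
    field_simp
    ring
  rw [hexp]
  field_simp

/-- Spatial autocorrelation of the canonical OU∧ process: with t* = t - d_x/(2c),
the ratio of the exponentially weighted intersection area to the weighted ambit area
equals exp(-λ d_x / c). -/
theorem canonical_OUwedge_spatial_autocorrelation
    (lam c t d_x : ℝ) (hlam : 0 < lam) (hc : 0 < c) (hd : 0 < d_x) :
    (∫ s in Set.Iic (t - d_x / (2 * c)),
        (2 * c * (t - s) - d_x) * Real.exp (-(2 * lam * (t - s)))) /
      (∫ s in Set.Iic t, 2 * c * (t - s) * Real.exp (-(2 * lam * (t - s))))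
    = Real.exp (-(lam * d_x / c)) :=
  canonical_OUwedge_spatial_autocorrelation_general lam c t d_x hlam hc
end

section
/- Let λ > 0, c > 0, d_t ≥ 0 and d_x ∈ ℝ. Then the spatio-temporal autocorrelation of the canonical OU∧ process satisfies Corr[Y_t(x), Y_{t+d_t}(x+d_x)] = min(exp(-λ d_t), exp(-λ|d_x|/c)). Equivalently, exp(-λ d_t) · ∫_{A_t(x) ∩ A_{t+d_t}(x+d_x)} exp(-2λ(t-s)) dξ ds / ∫_{A_t(x)} exp(-2λ(t-s)) dξ ds = min(exp(-λ d_t), exp(-λ|d_x|/c)). -/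
open MeasureTheory Real

section AuxLemmas

open Set


lemma intExpIic (k b : ℝ) (hk : 0 < k) :
    ∫ s in Iic b, Real.exp (k * s) = Real.exp (k * b) / k := by
  have h := integral_comp_neg_Iic b (fun x => Real.exp (-(k * x)))
  simp only [mul_neg, neg_neg] at h
  rw [h, integral_comp_mul_left_Ioi (fun u => Real.exp (-u)) _ hk]
  rw [integral_exp_neg_Ioi, smul_eq_mul, mul_neg, neg_neg, inv_mul_eq_div]

lemma intExpIicInt (k b : ℝ) (hk : 0 < k) :
    IntegrableOn (fun s => Real.exp (k * s)) (Iic b) := by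
  have m : MeasurableEmbedding (fun x : ℝ => -x) :=
    (Homeomorph.neg ℝ).measurableEmbedding
  have h0 : IntegrableOn (fun x : ℝ => Real.exp (k * x)) (Iic b)
      (Measure.map (fun x : ℝ => -x) volume) := by
    rw [m.integrableOn_map_iff]
    have hset : ((fun x : ℝ => -x) ⁻¹' Iic b) = Ici (-b) := by
      ext y; simp [neg_le]
    rw [hset]
    have hfun : ((fun x : ℝ => Real.exp (k * x)) ∘ (fun x : ℝ => -x))
        = fun x : ℝ => Real.exp (-k * x) := by
      funext y; simp [Function.comp]
    rw [hfun, integrableOn_Ici_iff_integrableOn_Ioi]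
    exact exp_neg_integrableOn_Ioi (-b) hk
  rwa [Measure.map_neg_eq_self] at h0

lemma intExpAbs (m : ℝ) (hm : 0 < m) :
    ∫ x : ℝ, Real.exp (-(m * |x|)) = 2 / m := by
  have h := integral_comp_abs (f := fun x => Real.exp (-(m * x)))
  rw [h, integral_comp_mul_left_Ioi (fun u => Real.exp (-u)) _ hm, mul_zero,
    integral_exp_neg_Ioi, smul_eq_mul, neg_zero, Real.exp_zero, mul_one]
  rw [eq_div_iff hm.ne']; field_simp

lemma intExpAbsInt (m : ℝ) (hm : 0 < m) :
    Integrable (fun x : ℝ => Real.exp (-(m * |x|))) := by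
  have h1 : IntegrableOn (fun x : ℝ => Real.exp (-(m * |x|))) (Ioi 0) := by
    refine (exp_neg_integrableOn_Ioi 0 hm).congr_fun ?_ measurableSet_Ioi
    intro y hy
    simp only []
    rw [abs_of_pos (by exact hy), neg_mul]
  have h2 : IntegrableOn (fun x : ℝ => Real.exp (-(m * |x|))) (Iic 0) := by
    refine (intExpIicInt m 0 hm).congr_fun ?_ measurableSet_Iic
    intro y hy
    simp only []
    rw [abs_of_nonpos (mem_Iic.mp hy)]
    congr 1; ring
  have h3 := h2.union h1
  rwa [Iic_union_Ioi, integrableOn_univ] at h3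

lemma cone_integral (lam c : ℝ) (hlam : 0 < lam) (hc : 0 < c) (t t0 x0 : ℝ) :
    (∫ p in {p : ℝ × ℝ | p.2 ≤ t0 ∧ |p.1 - x0| ≤ c * (t0 - p.2)},
      Real.exp (-(2 * lam * (t - p.2))))
    = Real.exp (-(2 * lam * (t - t0))) * (c / (2 * lam ^ 2)) := by
  have hkpos : 0 < 2 * lam := by positivity
  set k : ℝ := 2 * lam with hk
  -- the set rewritten as a "region under a graph"
  have hSeq : {p : ℝ × ℝ | p.2 ≤ t0 ∧ |p.1 - x0| ≤ c * (t0 - p.2)}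
      = {p : ℝ × ℝ | p.2 ≤ t0 - |p.1 - x0| / c} := by
    ext p
    simp only [mem_setOf_eq]
    constructor
    · rintro ⟨-, h2⟩
      have h3 : |p.1 - x0| / c ≤ t0 - p.2 := by
        rw [div_le_iff₀ hc]; linarith [h2]
      linarith
    · intro h
      have h0 : 0 ≤ |p.1 - x0| / c := by positivity
      refine ⟨by linarith, ?_⟩
      have h4 : |p.1 - x0| ≤ (t0 - p.2) * c := (div_le_iff₀ hc).mp (by linarith)
      linarith
  rw [hSeq]
  have hS : MeasurableSet {p : ℝ × ℝ | p.2 ≤ t0 - |p.1 - x0| / c} := by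
    apply measurableSet_le (by fun_prop) (by fun_prop)
  rw [← integral_indicator hS]
  set F : ℝ × ℝ → ℝ :=
    ({p : ℝ × ℝ | p.2 ≤ t0 - |p.1 - x0| / c}).indicator
      (fun p => Real.exp (-(k * (t - p.2)))) with hF
  have hrw : ∀ ξ s : ℝ, F (ξ, s)
      = (Iic (t0 - |ξ - x0| / c)).indicator (fun s => Real.exp (-(k * (t - s)))) s := by
    intro ξ s
    by_cases h : s ≤ t0 - |ξ - x0| / c
    · rw [hF, indicator_of_mem (by exact h), indicator_of_mem (mem_Iic.mpr h)]
    · rw [hF, indicator_of_notMem (by exact h), indicator_of_notMem (by simpa using h)]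
  have hexp : ∀ s : ℝ, Real.exp (-(k * (t - s))) = Real.exp (-(k * t)) * Real.exp (k * s) := by
    intro s; rw [← Real.exp_add]; ring_nf
  have hslice : ∀ b : ℝ, (∫ s in Iic b, Real.exp (-(k * (t - s))))
      = Real.exp (-(k * t)) * (Real.exp (k * b) / k) := by
    intro b
    simp_rw [hexp]
    rw [integral_const_mul, intExpIic k b hkpos]
  have hsliceInt : ∀ b : ℝ, IntegrableOn (fun s => Real.exp (-(k * (t - s)))) (Iic b) := by
    intro b
    have h : IntegrableOn (fun s => Real.exp (-(k * t)) * Real.exp (k * s)) (Iic b) :=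
      (intExpIicInt k b hkpos).const_mul (Real.exp (-(k * t)))
    refine h.congr_fun (fun s _ => ?_) measurableSet_Iic
    exact (hexp s).symm
  have hinner : ∀ ξ : ℝ, (∫ s, F (ξ, s))
      = (Real.exp (-(k * (t - t0))) / k) * Real.exp (-(k / c * |ξ - x0|)) := by
    intro ξ
    have h1 : (fun s => F (ξ, s))
        = (Iic (t0 - |ξ - x0| / c)).indicator (fun s => Real.exp (-(k * (t - s)))) := by
      funext s; exact hrw ξ s
    rw [h1, integral_indicator measurableSet_Iic, hslice]
    have key : Real.exp (-(k * t)) * Real.exp (k * (t0 - |ξ - x0| / c))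
        = Real.exp (-(k * (t - t0))) * Real.exp (-(k / c * |ξ - x0|)) := by
      rw [← Real.exp_add, ← Real.exp_add]
      congr 1
      field_simp
      ring
    rw [mul_div_assoc', div_mul_eq_mul_div, key]
  have hFmeas : AEStronglyMeasurable F ((volume : Measure ℝ).prod volume) := by
    have : Measurable F := by
      apply Measurable.indicator (by fun_prop) hS
    exact this.aestronglyMeasurable
  have hFnn : ∀ p : ℝ × ℝ, 0 ≤ F p := fun p =>
    indicator_nonneg (fun q _ => (Real.exp_pos _).le) p
  have hFint : Integrable F ((volume : Measure ℝ).prod volume) := by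
    rw [integrable_prod_iff hFmeas]
    constructor
    · refine Filter.Eventually.of_forall (fun ξ => ?_)
      have h1 : (fun s => F (ξ, s))
          = (Iic (t0 - |ξ - x0| / c)).indicator (fun s => Real.exp (-(k * (t - s)))) := by
        funext s; exact hrw ξ s
      rw [h1, integrable_indicator_iff measurableSet_Iic]
      exact hsliceInt _
    · have h2 : (fun ξ : ℝ => ∫ s, ‖F (ξ, s)‖)
          = fun ξ : ℝ => (Real.exp (-(k * (t - t0))) / k) * Real.exp (-(k / c * |ξ - x0|)) := by
        funext ξ
        have : ∀ s : ℝ, ‖F (ξ, s)‖ = F (ξ, s) := fun s => by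
          rw [Real.norm_eq_abs, abs_of_nonneg (hFnn _)]
        simp_rw [this]
        exact hinner ξ
      rw [h2]
      exact ((intExpAbsInt (k / c) (by positivity)).comp_sub_right x0).const_mul _
  have hprod : (volume : Measure (ℝ × ℝ)) = (volume : Measure ℝ).prod volume := rfl
  rw [hprod, integral_prod F hFint]
  have h3 : (fun ξ : ℝ => ∫ s, F (ξ, s))
      = fun ξ : ℝ => (Real.exp (-(k * (t - t0))) / k) * Real.exp (-(k / c * |ξ - x0|)) := by
    funext ξ; exact hinner ξ
  rw [h3, integral_const_mul]
  have h4 : (∫ ξ : ℝ, Real.exp (-(k / c * |ξ - x0|)))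
      = ∫ ξ : ℝ, Real.exp (-(k / c * |ξ|)) :=
    integral_sub_right_eq_self (fun u => Real.exp (-(k / c * |u|))) x0
  rw [h4, intExpAbs (k / c) (by positivity), hk]
  have he := Real.exp_ne_zero (-(2 * lam * (t - t0)))
  field_simp

end AuxLemmas

section Main

open Set

/-- Spatio-temporal autocorrelation of the canonical OU∧ process:
`Corr[Y_t(x), Y_{t+d_t}(x+d_x)] = min(exp(-λ d_t), exp(-λ|d_x|/c))`, expressed through
the weighted areas of the ambit sets `A_t(x) = {(ξ,s) : s ≤ t, |ξ-x| ≤ c(t-s)}`. -/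
theorem canonical_OUwedge_spatiotemporal_autocorrelation
    (lam c x t d_t d_x : ℝ) (hlam : 0 < lam) (hc : 0 < c) (hdt : 0 ≤ d_t)
    (A : ℝ → ℝ → Set (ℝ × ℝ))
    (hA : A = fun t' x' => {p : ℝ × ℝ | p.2 ≤ t' ∧ |p.1 - x'| ≤ c * (t' - p.2)}) :
    Real.exp (-(lam * d_t)) *
      (∫ p in A t x ∩ A (t + d_t) (x + d_x), Real.exp (-(2 * lam * (t - p.2)))) /
      (∫ p in A t x, Real.exp (-(2 * lam * (t - p.2))))
    = min (Real.exp (-(lam * d_t))) (Real.exp (-(lam * |d_x| / c))) := by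
  subst hA
  simp only
  have D := cone_integral lam c hlam hc t t x
  rw [sub_self, mul_zero, neg_zero, Real.exp_zero, one_mul] at D
  have hKpos : (0 : ℝ) < c / (2 * lam ^ 2) := by positivity
  rcases le_or_gt |d_x| (c * d_t) with hcase | hcase
  · -- the earlier ambit set is contained in the later one
    have hsub : {p : ℝ × ℝ | p.2 ≤ t ∧ |p.1 - x| ≤ c * (t - p.2)}
        ∩ {p : ℝ × ℝ | p.2 ≤ t + d_t ∧ |p.1 - (x + d_x)| ≤ c * (t + d_t - p.2)}
        = {p : ℝ × ℝ | p.2 ≤ t ∧ |p.1 - x| ≤ c * (t - p.2)} := by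
      apply inter_eq_left.mpr
      rintro ⟨ξ, s⟩ ⟨h1, h2⟩
      obtain ⟨hd1, hd2⟩ := abs_le.mp hcase
      rw [abs_le] at h2
      have hcdt : 0 ≤ c * d_t := mul_nonneg hc.le hdt
      simp only [mem_setOf_eq] at *
      refine ⟨by linarith, ?_⟩
      rw [abs_le]
      constructor <;> linarith
    rw [hsub, D, mul_div_assoc, div_self (ne_of_gt hKpos), mul_one]
    rw [min_eq_left]
    apply Real.exp_le_exp.mpr
    apply neg_le_neg
    rw [div_le_iff₀ hc]
    nlinarith
  · set u : ℝ := (|d_x| - c * d_t) / (2 * c) with hu_def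
    have hu_pos : 0 < u := by
      apply div_pos (by linarith) (by positivity)
    have hu : 2 * c * u = |d_x| - c * d_t := by
      rw [hu_def]; field_simp
    have hcu : 0 < c * u := by positivity
    have hcdt : 0 ≤ c * d_t := mul_nonneg hc.le hdt
    set xs : ℝ := if 0 ≤ d_x then x + c * u else x - c * u with hxs
    have hinter : {p : ℝ × ℝ | p.2 ≤ t ∧ |p.1 - x| ≤ c * (t - p.2)}
        ∩ {p : ℝ × ℝ | p.2 ≤ t + d_t ∧ |p.1 - (x + d_x)| ≤ c * (t + d_t - p.2)}
        = {p : ℝ × ℝ | p.2 ≤ t - u ∧ |p.1 - xs| ≤ c * (t - u - p.2)} := by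
      ext ⟨ξ, s⟩
      simp only [mem_inter_iff, mem_setOf_eq, abs_le]
      rcases le_or_gt 0 d_x with hdx | hdx
      · rw [hxs, if_pos hdx]
        rw [abs_of_nonneg hdx] at hu
        constructor
        · rintro ⟨⟨h1, h2, h3⟩, h4, h5, h6⟩
          have h7 : 2 * c * u ≤ 2 * c * (t - s) := by linarith
          have h8 : u ≤ t - s := le_of_mul_le_mul_left h7 (by positivity)
          exact ⟨by linarith, by linarith, by linarith⟩
        · rintro ⟨h1, h2, h3⟩
          exact ⟨⟨by linarith, by linarith, by linarith⟩,
            by linarith, by linarith, by linarith⟩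
      · rw [hxs, if_neg (not_le.mpr hdx)]
        rw [abs_of_neg hdx] at hu
        constructor
        · rintro ⟨⟨h1, h2, h3⟩, h4, h5, h6⟩
          have h7 : 2 * c * u ≤ 2 * c * (t - s) := by linarith
          have h8 : u ≤ t - s := le_of_mul_le_mul_left h7 (by positivity)
          exact ⟨by linarith, by linarith, by linarith⟩
        · rintro ⟨h1, h2, h3⟩
          exact ⟨⟨by linarith, by linarith, by linarith⟩,
            by linarith, by linarith, by linarith⟩
    rw [hinter, cone_integral lam c hlam hc t (t - u) xs, D]
    rw [show t - (t - u) = u by ring]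
    rw [mul_div_assoc, mul_div_assoc, div_self (ne_of_gt hKpos), mul_one]
    rw [← Real.exp_add]
    rw [min_eq_right]
    · congr 1
      rw [hu_def]
      field_simp
      ring
    · apply Real.exp_le_exp.mpr
      apply neg_le_neg
      rw [le_div_iff₀ hc]
      nlinarith

end Main
end

section
/- Let λ > 0, c₁ > 0, c₂ > 0, and let g(w) = c₁w for 0 ≤ w ≤ 1 and g(w) = c₁ + c₂(w-1) for w > 1. For 0 < d_x ≤ 2c₁, the spatial autocorrelation of the g-class OU∧ process equals [(c₁ + (c₂-c₁)e^{-2λ(1 - d_x/(2c₁))}) e^{-λ d_x/c₁}] / [c₁ + (c₂-c₁)e^{-2λ}], and for d_x > 2c₁ it equals c₂ e^{-2λ(1 + (d_x - 2c₁)/(2c₂))} / [c₁ + (c₂-c₁)e^{-2λ}]. -/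
/-!
Put `a = 2λ` and `s = g⁻¹(d/2)`, so that `2 g(s) = d`. The substitution `u = w + s` turns the
numerator into `2 ∫_s^∞ (g(u) - g(s)) e^{-au} du`, and the denominator is the same expression
at `s = 0`. For `s ≤ 1`, `g(u) - g(s)` is `c₁ (u - s)` plus the hinge `(c₂ - c₁) (u - 1)⁺`; for
`s ≥ 1` it is `c₂ (u - s)` on `(s, ∞)`. Both tails therefore reduce to
`∫_b^∞ (x - b) e^{-ax} dx = e^{-ab} / a²`, and the common factor `2 / a²` cancels in the ratio.
-/

open MeasureTheory Real Set Filter Topology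

section
variable {a : ℝ}

lemma hasDerivAt_sub_mul_exp_neg_mul_primitive (ha : a ≠ 0) (b x : ℝ) :
    HasDerivAt (fun x => -((x - b) / a + 1 / a ^ 2) * exp (-(a * x)))
      ((x - b) * exp (-(a * x))) x := by
  have hexp : HasDerivAt (fun x => exp (-(a * x))) (-a * exp (-(a * x))) x := by
    simpa [mul_comm] using ((hasDerivAt_id x).const_mul a).neg.exp
  have hlin : HasDerivAt (fun x => -((x - b) / a + 1 / a ^ 2)) (-(1 / a)) x :=
    ((((hasDerivAt_id x).sub_const b).div_const a).add_const (1 / a ^ 2)).neg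
  exact (hlin.mul hexp).congr_deriv (by field_simp; ring)

lemma tendsto_sub_mul_exp_neg_mul_primitive (ha : 0 < a) (b : ℝ) :
    Tendsto (fun x => -((x - b) / a + 1 / a ^ 2) * exp (-(a * x))) atTop (𝓝 0) := by
  have h := (((tendsto_pow_mul_exp_neg_atTop_nhds_zero 1).add
    (tendsto_exp_neg_atTop_nhds_zero.const_mul (1 - a * b))).comp
    (tendsto_id.const_mul_atTop ha)).const_mul (-(1 / a ^ 2))
  simp only [mul_zero, add_zero] at h
  refine h.congr fun x => ?_
  simp only [Function.comp_apply, id, pow_one]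
  field_simp
  ring

lemma integral_Ioi_sub_mul_exp_neg_mul (ha : 0 < a) (b : ℝ) :
    ∫ x in Ioi b, (x - b) * exp (-(a * x)) = exp (-(a * b)) / a ^ 2 := by
  rw [integral_Ioi_of_hasDerivAt_of_nonneg'
    (fun x _ => hasDerivAt_sub_mul_exp_neg_mul_primitive ha.ne' b x)
    (fun _ hx => mul_nonneg (sub_nonneg.2 hx.le) (exp_pos _).le)
    (tendsto_sub_mul_exp_neg_mul_primitive ha b)]
  ring

lemma integrableOn_Ioi_sub_mul_exp_neg_mul (ha : 0 < a) (b : ℝ) :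
    IntegrableOn (fun x => (x - b) * exp (-(a * x))) (Ioi b) :=
  integrableOn_Ioi_deriv_of_nonneg'
    (fun x _ => hasDerivAt_sub_mul_exp_neg_mul_primitive ha.ne' b x)
    (fun _ hx => mul_nonneg (sub_nonneg.2 hx.le) (exp_pos _).le)
    (tendsto_sub_mul_exp_neg_mul_primitive ha b)

end

lemma integral_Ioi_comp_add_right {E : Type*} [NormedAddCommGroup E] [NormedSpace ℝ E]
    (f : ℝ → E) (s : ℝ) :
    ∫ w in Ioi 0, f (w + s) = ∫ u in Ioi s, f u := by
  simpa using (measurePreserving_add_right volume s).setIntegral_preimage_emb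
    (measurableEmbedding_addRight s) f (Ioi s)

noncomputable def brokenLine (c₁ c₂ w : ℝ) : ℝ := if w ≤ 1 then c₁ * w else c₁ + c₂ * (w - 1)

namespace brokenLine

variable {c₁ c₂ s : ℝ}

lemma sub_of_le_one (hs : s ≤ 1) (u : ℝ) :
    brokenLine c₁ c₂ u - brokenLine c₁ c₂ s =
      c₁ * (u - s) + (Ioi 1).indicator (fun u => (c₂ - c₁) * (u - 1)) u := by
  rw [brokenLine, brokenLine, if_pos hs]
  by_cases hu : u ≤ 1
  · rw [if_pos hu, indicator_of_notMem (notMem_Ioi.2 hu)]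
    ring
  · rw [if_neg hu, indicator_of_mem (mem_Ioi.2 (not_le.1 hu))]
    ring

lemma sub_of_one_le (hs : 1 ≤ s) {u : ℝ} (hu : s < u) :
    brokenLine c₁ c₂ u - brokenLine c₁ c₂ s = c₂ * (u - s) := by
  rw [brokenLine, brokenLine, if_neg (by linarith)]
  split_ifs with hs'
  · obtain rfl : s = 1 := le_antisymm hs' hs
    ring
  · ring

variable {a : ℝ}

lemma integral_Ioi_sub_mul_exp_of_le_one (ha : 0 < a) (hs : s ≤ 1) :
    ∫ u in Ioi s, (brokenLine c₁ c₂ u - brokenLine c₁ c₂ s) * exp (-(a * u)) =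
      (c₁ * exp (-(a * s)) + (c₂ - c₁) * exp (-a)) / a ^ 2 := by
  have hsplit : ∀ u, (brokenLine c₁ c₂ u - brokenLine c₁ c₂ s) * exp (-(a * u)) =
      c₁ * ((u - s) * exp (-(a * u))) +
        (Ioi 1).indicator (fun u => (c₂ - c₁) * ((u - 1) * exp (-(a * u)))) u := by
    intro u
    rw [sub_of_le_one hs]
    by_cases hu : u ∈ Ioi 1
    · rw [indicator_of_mem hu, indicator_of_mem hu]
      ring
    · rw [indicator_of_notMem hu, indicator_of_notMem hu]
      ring
  have hint : IntegrableOn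
      ((Ioi 1).indicator (fun u => (c₂ - c₁) * ((u - 1) * exp (-(a * u))))) (Ioi s) := by
    refine (integrableOn_indicator_iff measurableSet_Ioi).2 ?_
    rw [inter_eq_left.2 (Ioi_subset_Ioi hs)]
    exact (integrableOn_Ioi_sub_mul_exp_neg_mul ha 1).const_mul _
  simp_rw [hsplit]
  rw [integral_add ((integrableOn_Ioi_sub_mul_exp_neg_mul ha s).const_mul c₁) hint,
    integral_const_mul, setIntegral_indicator measurableSet_Ioi,
    inter_eq_right.2 (Ioi_subset_Ioi hs), integral_const_mul,
    integral_Ioi_sub_mul_exp_neg_mul ha, integral_Ioi_sub_mul_exp_neg_mul ha, mul_one]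
  ring

lemma integral_Ioi_sub_mul_exp_of_one_le (ha : 0 < a) (hs : 1 ≤ s) :
    ∫ u in Ioi s, (brokenLine c₁ c₂ u - brokenLine c₁ c₂ s) * exp (-(a * u)) =
      c₂ * exp (-(a * s)) / a ^ 2 := by
  rw [setIntegral_congr_fun measurableSet_Ioi
      (fun u hu => by rw [sub_of_one_le hs hu, mul_assoc]),
    integral_const_mul, integral_Ioi_sub_mul_exp_neg_mul ha, mul_div_assoc]

end brokenLine

lemma integral_Ioi_two_mul_sub_mul_exp_shift (g : ℝ → ℝ) {s d : ℝ} (hd : 2 * g s = d)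
    (a : ℝ) :
    ∫ w in Ioi 0, (2 * g (w + s) - d) * exp (-(a * (w + s))) =
      2 * ∫ u in Ioi s, (g u - g s) * exp (-(a * u)) := by
  subst hd
  rw [integral_Ioi_comp_add_right (fun u => (2 * g u - 2 * g s) * exp (-(a * u))),
    ← integral_const_mul]
  congr 1 with u
  ring

theorem gclass_piecewise_spatial_autocorrelation_general
    (lam c₁ c₂ d_x : ℝ) (hlam : 0 < lam) (hc₁ : 0 < c₁) (hc₂ : 0 < c₂)
    (g : ℝ → ℝ) (hg : g = fun w => if w ≤ 1 then c₁ * w else c₁ + c₂ * (w - 1))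
    (gi : ℝ) (hgi : gi = if d_x ≤ 2 * c₁ then d_x / (2 * c₁)
      else 1 + (d_x - 2 * c₁) / (2 * c₂))
    (ρ : ℝ)
    (hρ : ρ = (∫ w in Set.Ioi (0:ℝ),
        (2 * g (w + gi) - d_x) * Real.exp (-(2 * lam * (w + gi)))) /
      (∫ w in Set.Ioi (0:ℝ), 2 * g w * Real.exp (-(2 * lam * w)))) :
    (d_x ≤ 2 * c₁ →
      ρ = (c₁ + (c₂ - c₁) * Real.exp (-(2 * lam * (1 - d_x / (2 * c₁))))) *
          Real.exp (-(lam * d_x / c₁)) /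
          (c₁ + (c₂ - c₁) * Real.exp (-(2 * lam))))
    ∧ (2 * c₁ < d_x →
      ρ = c₂ * Real.exp (-(2 * lam * (1 + (d_x - 2 * c₁) / (2 * c₂)))) /
          (c₁ + (c₂ - c₁) * Real.exp (-(2 * lam)))) := by
  have hg' : g = brokenLine c₁ c₂ := hg
  subst hg' hρ
  have ha : 0 < 2 * lam := by positivity
  have hden : ∫ w in Ioi 0, 2 * brokenLine c₁ c₂ w * exp (-(2 * lam * w)) =
      2 * ((c₁ + (c₂ - c₁) * exp (-(2 * lam))) / (2 * lam) ^ 2) := by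
    have h := integral_Ioi_two_mul_sub_mul_exp_shift (brokenLine c₁ c₂) (s := 0) (d := 0)
      (by simp [brokenLine]) (2 * lam)
    simpa only [add_zero, sub_zero, mul_zero, neg_zero, exp_zero, mul_one,
      brokenLine.integral_Ioi_sub_mul_exp_of_le_one ha zero_le_one] using h
  refine ⟨fun hd => ?_, fun hd => ?_⟩
  · rw [if_pos hd] at hgi
    have hs : gi ≤ 1 := by
      rw [hgi, div_le_one (by positivity)]; exact hd
    have hgd : 2 * brokenLine c₁ c₂ gi = d_x := by
      rw [brokenLine, if_pos hs, hgi]; field_simp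
    have hexp : exp (-(2 * lam)) = exp (-(2 * lam * (1 - gi))) * exp (-(2 * lam * gi)) := by
      rw [← exp_add]; ring_nf
    have hK : exp (-(lam * d_x / c₁)) = exp (-(2 * lam * gi)) := by
      rw [hgi]; congr 1; field_simp
    rw [integral_Ioi_two_mul_sub_mul_exp_shift _ hgd,
      brokenLine.integral_Ioi_sub_mul_exp_of_le_one ha hs, hden, hK, ← hgi, hexp,
      mul_div_mul_left _ _ two_ne_zero, div_div_div_cancel_right₀ (pow_ne_zero 2 ha.ne')]
    ring
  · rw [if_neg (not_le.2 hd)] at hgi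
    have hs : 1 < gi := by
      rw [hgi]; linarith [div_pos (sub_pos.2 hd) (mul_pos two_pos hc₂)]
    have hgd : 2 * brokenLine c₁ c₂ gi = d_x := by
      rw [brokenLine, if_neg (not_le.2 hs), hgi]; field_simp; ring
    rw [integral_Ioi_two_mul_sub_mul_exp_shift _ hgd,
      brokenLine.integral_Ioi_sub_mul_exp_of_one_le ha hs.le, hden, ← hgi,
      mul_div_mul_left _ _ two_ne_zero, div_div_div_cancel_right₀ (pow_ne_zero 2 ha.ne')]

/-- Spatial autocorrelation of the g-class OU∧ process with piecewise-linear
`g(w) = c₁ w` for `w ≤ 1` and `g(w) = c₁ + c₂ (w - 1)` for `w > 1`. -/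
theorem gclass_piecewise_spatial_autocorrelation
    (lam c₁ c₂ d_x : ℝ) (hlam : 0 < lam) (hc₁ : 0 < c₁) (hc₂ : 0 < c₂) (hd : 0 < d_x)
    (g : ℝ → ℝ) (hg : g = fun w => if w ≤ 1 then c₁ * w else c₁ + c₂ * (w - 1))
    (gi : ℝ) (hgi : gi = if d_x ≤ 2 * c₁ then d_x / (2 * c₁)
      else 1 + (d_x - 2 * c₁) / (2 * c₂))
    (ρ : ℝ)
    (hρ : ρ = (∫ w in Set.Ioi (0:ℝ),
        (2 * g (w + gi) - d_x) * Real.exp (-(2 * lam * (w + gi)))) /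
      (∫ w in Set.Ioi (0:ℝ), 2 * g w * Real.exp (-(2 * lam * w)))) :
    (d_x ≤ 2 * c₁ →
      ρ = (c₁ + (c₂ - c₁) * Real.exp (-(2 * lam * (1 - d_x / (2 * c₁))))) *
          Real.exp (-(lam * d_x / c₁)) /
          (c₁ + (c₂ - c₁) * Real.exp (-(2 * lam))))
    ∧ (2 * c₁ < d_x →
      ρ = c₂ * Real.exp (-(2 * lam * (1 + (d_x - 2 * c₁) / (2 * c₂)))) /
          (c₁ + (c₂ - c₁) * Real.exp (-(2 * lam)))) :=
  gclass_piecewise_spatial_autocorrelation_general lam c₁ c₂ d_x hlam hc₁ hc₂ g hg gi hgi ρ hρ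
end

section
/- Let λ > 0, c > 0, q ∈ ℕ. For the time-changed OU∧ process of order q+1 defined by Y_t(x) = ∫_{-∞}^{t} ∫_{x-c(t-s)^q}^{x+c(t-s)^q} exp(-λ(t-s)) L(dξ, λ^{q+1} ds), the cumulant generating function equals ∫_0^∞ 2c w^q C{θ e^{-w} ‡ L'} dw and hence does not depend on λ. -/
open MeasureTheory Real

/-! Integrating out ξ leaves the cone width `2 c (t - s)^q`; the substitution `u = t - s` turns
the integral over `s ≤ t` into one over `u > 0`, and the scaling `w = λ u` absorbs the factor
`λ^(q+1) = λ · λ^q`. -/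

section

variable {E : Type*} [NormedAddCommGroup E] [NormedSpace ℝ E]

open Set

theorem setIntegral_Iic_comp_sub (t : ℝ) (f : ℝ → E) :
    ∫ s in Iic t, f (t - s) = ∫ u in Ioi (0 : ℝ), f u := by
  have hpre : (fun s : ℝ => t - s) ⁻¹' Ici 0 = Iic t := by
    ext s
    simp
  rw [← integral_Ici_eq_integral_Ioi, ← hpre]
  exact (Measure.measurePreserving_sub_left volume t).setIntegral_preimage_emb
    (Homeomorph.subLeft t).measurableEmbedding f (Ici 0)

theorem setIntegral_Icc_sub_add_const [CompleteSpace E] (x : ℝ) {r : ℝ} (hr : 0 ≤ r) (z : E) :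
    ∫ _ in Icc (x - r) (x + r), z = (2 * r) • z := by
  rw [setIntegral_const, measureReal_def, Real.volume_Icc, ENNReal.toReal_ofReal (by linarith)]
  ring_nf

end

/-- For the time-changed OU∧ process of order q+1, the cumulant generating function
equals `∫_0^∞ 2 c w^q C{θ e^{-w} ‡ L'} dw`, and hence does not depend on λ. -/
theorem TCOUwedge_order_q_cgf_lambda_free
    (lam c x t : ℝ) (hlam : 0 < lam) (hc : 0 < c) (q : ℕ)
    (C : ℝ → ℂ) (θ : ℝ) :
    ∫ s in Set.Iic t, ∫ ξ in Set.Icc (x - c * (t - s) ^ q) (x + c * (t - s) ^ q),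
        ((lam : ℂ) ^ (q + 1)) * C (θ * Real.exp (-(lam * (t - s))))
      = ∫ w in Set.Ioi (0:ℝ), (2 * c * w ^ q : ℝ) * C (θ * Real.exp (-w)) := by
  set G : ℝ → ℂ := fun w => (2 * c * w ^ q : ℝ) * C (θ * Real.exp (-w))
  calc _ = ∫ s in Set.Iic t, lam • G (lam * (t - s)) := by
        refine setIntegral_congr_fun measurableSet_Iic fun s hs => ?_
        have hts : 0 ≤ t - s := sub_nonneg.mpr hs
        rw [setIntegral_Icc_sub_add_const x (by positivity)]
        simp only [G, Complex.real_smul]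
        push_cast [mul_pow]
        ring
    _ = ∫ u in Set.Ioi (0:ℝ), lam • G (lam * u) :=
        setIntegral_Iic_comp_sub t fun u => lam • G (lam * u)
    _ = ∫ w in Set.Ioi (0:ℝ), G w := by
        rw [integral_smul, integral_comp_mul_left_Ioi' G 0 hlam, mul_zero]
end

section
/- The joint cumulant generating function of n values of the canonical Gaussian OU∧ process is: C{θ ‡ (Y_{t₁}(x₁),...,Y_{t_n}(x_n))} = i(2cμ/λ²) Σᵢ θ̃ᵢ − (cτ²/(4λ²)) Σ_{i,j} θ̃ᵢθ̃ⱼ min(exp(-λ|tᵢ-tⱼ|), exp(-λ|xᵢ-xⱼ|/c)), where θ̃ᵢ = θθᵢ. In particular the vector (Y_{t₁}(x₁),...,Y_{t_n}(x_n)) is multivariate normal with common mean 2cμ/λ² and covariance matrix Σᵢⱼ = (cτ²/(2λ²)) min(exp(-λ|tᵢ-tⱼ|), exp(-λ|xᵢ-xⱼ|/c)). -/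
/-!
The Gaussian seed CGF is a quadratic polynomial, so `∫ C{θ h ‡ L'}` only involves `∫ h` and
`∫ h²`, i.e. the integrals of the kernels `e^{-λ(t-s)} 1_{A_t(x)}` and of their pairwise products.
For fixed `s` the slices of `A_{tᵢ}(xᵢ)` and `A_{tⱼ}(xⱼ)` are intervals whose intersection has
length `2c v⁺`, where `v = (tᵢ + tⱼ - q)/2 - s` and `q = max |tᵢ - tⱼ| (|xᵢ - xⱼ|/c)`, while the
two exponential weights multiply to `e^{-λq} e^{-2λv}`. Integrating in `s` gives
`2c e^{-λq} ∫ v⁺ e^{-2λv} dv = (c/(2λ²)) e^{-λq}`, and `e^{-λq}` is the minimum in the formula.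
The single integral `2c/λ²` is the diagonal case of this at rate `λ/2`.
-/

open MeasureTheory Real Set

lemma min_add_sub_max_sub (a b r ρ : ℝ) :
    min (a + r) (b + ρ) - max (a - r) (b - ρ) = r + ρ - max |r - ρ| |a - b| := by
  rcases le_total a b with hab | hab <;> rcases le_total r ρ with hrρ | hrρ <;>
    simp only [abs_of_nonpos, abs_of_nonneg, sub_nonpos, sub_nonneg, hab, hrρ, min_def,
      max_def] <;>
    split_ifs <;> linarith

lemma integral_max_zero_mul_exp_neg_mul {β : ℝ} (hβ : 0 < β) :
    Integrable (fun v => max v 0 * exp (-(β * v))) ∧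
      ∫ v, max v 0 * exp (-(β * v)) = 1 / β ^ 2 := by
  have hmax : (fun v => max v 0 * exp (-(β * v)))
      = (Ioi 0).indicator (fun v => v * exp (-(β * v))) := by
    ext v
    rcases le_or_gt v 0 with hv | hv
    · simp [hv]
    · simp [hv, max_eq_left hv.le]
  have hint : IntegrableOn (fun v => v * exp (-(β * v))) (Ioi 0) := by
    refine (integrableOn_rpow_mul_exp_neg_mul_rpow (s := 1) (p := 1) (by norm_num) one_pos
      hβ).congr_fun (fun v _ => ?_) measurableSet_Ioi
    simp [neg_mul]
  rw [hmax, integrable_indicator_iff measurableSet_Ioi, integral_indicator measurableSet_Ioi]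
  refine ⟨hint, ?_⟩
  have := integral_rpow_mul_exp_neg_mul_Ioi (a := 2) two_pos hβ
  norm_num at this
  simpa using this

/-- `e^{-λ(t-s)} 1_{A_t(x)}(ξ, s)`, with `A_t(x)` written as the translate of `A_0(0)`. -/
noncomputable def ouKernel (c lam x t : ℝ) (p : ℝ × ℝ) : ℝ :=
  {q : ℝ × ℝ | q.2 ≤ 0 ∧ |q.1| ≤ c * (-q.2)}.indicator
    (fun _ => exp (-(lam * (t - p.2)))) (p.1 - x, p.2 - t)

lemma measurable_ouKernel (c lam x t : ℝ) : Measurable (ouKernel c lam x t) := by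
  have hA : MeasurableSet {q : ℝ × ℝ | q.2 ≤ 0 ∧ |q.1| ≤ c * (-q.2)} :=
    (measurableSet_le measurable_snd measurable_const).inter
      (measurableSet_le measurable_fst.abs (measurable_snd.neg.const_mul c))
  exact Measurable.indicator (f := fun p : ℝ × ℝ => exp (-(lam * (t - p.2)))) (by fun_prop)
    (hA.preimage (f := fun p : ℝ × ℝ => (p.1 - x, p.2 - t)) (by fun_prop))

lemma ouKernel_nonneg (c lam x t : ℝ) : 0 ≤ ouKernel c lam x t :=
  fun _ => indicator_nonneg (fun _ _ => (exp_pos _).le) _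

lemma ouKernel_apply {c : ℝ} (hc : 0 < c) (lam x t ξ s : ℝ) :
    ouKernel c lam x t (ξ, s)
      = (Icc (x - c * (t - s)) (x + c * (t - s))).indicator
          (fun _ => exp (-(lam * (t - s)))) ξ := by
  simp only [ouKernel, indicator_apply, mem_ofPred_eq, mem_Icc]
  refine if_congr ⟨fun ⟨_, h⟩ => ?_, fun ⟨h₁, h₂⟩ => ⟨?_, ?_⟩⟩ rfl rfl
  · rw [abs_le] at h; constructor <;> linarith
  · nlinarith
  · rw [abs_le]; constructor <;> linarith

lemma ouKernel_eq_mul_self (c lam x t : ℝ) :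
    ouKernel c lam x t = ouKernel c (lam / 2) x t * ouKernel c (lam / 2) x t := by
  ext p
  simp only [ouKernel, Pi.mul_apply, ← inter_indicator_mul, inter_self, ← exp_add]
  ring_nf

lemma integrable_and_integral_eq_of_integral_section {α β : Type*} [MeasurableSpace α]
    [MeasurableSpace β] {μ : Measure α} {ν : Measure β} [SFinite μ] [SFinite ν]
    {f : α × β → ℝ} {F : β → ℝ} (hf : AEStronglyMeasurable f (μ.prod ν)) (hf0 : 0 ≤ f)
    (hsec : ∀ y, Integrable (fun x => f (x, y)) μ) (hF : ∀ y, ∫ x, f (x, y) ∂μ = F y)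
    (hFint : Integrable F ν) :
    Integrable f (μ.prod ν) ∧ ∫ p, f p ∂μ.prod ν = ∫ y, F y ∂ν := by
  have hnorm : ∀ y, ∫ x, ‖f (x, y)‖ ∂μ = F y := fun y => by
    simp_rw [Real.norm_of_nonneg (hf0 _)]; exact hF y
  have hint : Integrable f (μ.prod ν) :=
    (integrable_prod_iff' hf).2 ⟨ae_of_all _ hsec, by simpa only [hnorm] using hFint⟩
  exact ⟨hint, by simp_rw [integral_prod_symm f hint, hF]⟩

section Cross

variable {c lam xi ti xj tj : ℝ}

lemma ouKernel_mul_apply (hc : 0 < c) (s ξ : ℝ) :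
    (ouKernel c lam xi ti * ouKernel c lam xj tj) (ξ, s)
      = (Icc (xi - c * (ti - s)) (xi + c * (ti - s))
          ∩ Icc (xj - c * (tj - s)) (xj + c * (tj - s))).indicator
            (fun _ => exp (-(lam * (ti - s))) * exp (-(lam * (tj - s)))) ξ := by
  rw [Pi.mul_apply, ouKernel_apply hc, ouKernel_apply hc, inter_indicator_mul]

lemma integral_ouKernel_mul_section (hc : 0 < c) (s : ℝ) :
    ∫ ξ, (ouKernel c lam xi ti * ouKernel c lam xj tj) (ξ, s)
      = 2 * c * exp (-(lam * max |ti - tj| (|xi - xj| / c)))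
        * (max ((ti + tj - max |ti - tj| (|xi - xj| / c)) / 2 - s) 0
          * exp (-(2 * lam * ((ti + tj - max |ti - tj| (|xi - xj| / c)) / 2 - s)))) := by
  set q := max |ti - tj| (|xi - xj| / c)
  have hlen : c * (ti - s) + c * (tj - s) - max |c * (ti - s) - c * (tj - s)| |xi - xj|
      = 2 * c * ((ti + tj - q) / 2 - s) := by
    rw [← mul_sub, abs_mul, abs_of_pos hc, sub_sub_sub_cancel_right,
      show |xi - xj| = c * (|xi - xj| / c) by field_simp, ← mul_max_of_nonneg _ _ hc.le]
    ring
  have hmax :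
      max (2 * c * ((ti + tj - q) / 2 - s)) 0 = 2 * c * max ((ti + tj - q) / 2 - s) 0 := by
    rw [mul_max_of_nonneg _ _ (by positivity : (0 : ℝ) ≤ 2 * c), mul_zero]
  simp_rw [ouKernel_mul_apply hc, Icc_inter_Icc]
  rw [integral_indicator_const _ measurableSet_Icc, volume_real_Icc, smul_eq_mul,
    min_add_sub_max_sub, hlen, hmax, ← exp_add,
    show -(lam * (ti - s)) + -(lam * (tj - s))
      = -(lam * q) + -(2 * lam * ((ti + tj - q) / 2 - s)) by ring, exp_add]
  ring

lemma integrable_and_integral_ouKernel_mul (hc : 0 < c) (hlam : 0 < lam) :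
    Integrable (ouKernel c lam xi ti * ouKernel c lam xj tj) ∧
      ∫ p, (ouKernel c lam xi ti * ouKernel c lam xj tj) p
        = c / (2 * lam ^ 2) * min (exp (-(lam * |ti - tj|))) (exp (-(lam * |xi - xj| / c))) := by
  set q := max |ti - tj| (|xi - xj| / c)
  obtain ⟨hψ, hψ_int⟩ := integral_max_zero_mul_exp_neg_mul (by positivity : 0 < 2 * lam)
  have hF := (hψ.comp_sub_left ((ti + tj - q) / 2)).const_mul (2 * c * exp (-(lam * q)))
  have hmin :
      exp (-(lam * q)) = min (exp (-(lam * |ti - tj|))) (exp (-(lam * |xi - xj| / c))) := by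
    rw [mul_div_assoc]
    exact Antitone.map_max (f := fun u => exp (-(lam * u)))
      fun a b hab => exp_le_exp.2 (by nlinarith)
  have hsec :
      ∀ s, Integrable fun ξ => (ouKernel c lam xi ti * ouKernel c lam xj tj) (ξ, s) := by
    intro s
    simp_rw [ouKernel_mul_apply hc]
    exact (integrable_indicator_iff (measurableSet_Icc.inter measurableSet_Icc)).2
      (integrableOn_const ((measure_mono inter_subset_left).trans_lt measure_Icc_lt_top).ne)
  obtain ⟨hint, heq⟩ := integrable_and_integral_eq_of_integral_section
    ((measurable_ouKernel _ _ _ _).mul (measurable_ouKernel _ _ _ _)).aestronglyMeasurable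
    (fun p => mul_nonneg (ouKernel_nonneg _ _ _ _ p) (ouKernel_nonneg _ _ _ _ p))
    hsec (integral_ouKernel_mul_section hc) hF
  refine ⟨hint, heq.trans ?_⟩
  have hshift : ∫ s, max ((ti + tj - q) / 2 - s) 0 * exp (-(2 * lam * ((ti + tj - q) / 2 - s)))
      = 1 / (2 * lam) ^ 2 :=
    (integral_sub_left_eq_self (fun v => max v 0 * exp (-(2 * lam * v))) _ _).trans hψ_int
  rw [integral_const_mul, hshift, ← hmin]
  field_simp
  ring

end Cross

lemma integrable_and_integral_ouKernel {c lam : ℝ} (x t : ℝ) (hc : 0 < c) (hlam : 0 < lam) :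
    Integrable (ouKernel c lam x t) ∧ ∫ p, ouKernel c lam x t p = 2 * c / lam ^ 2 := by
  obtain ⟨hint, heq⟩ := integrable_and_integral_ouKernel_mul (xi := x) (ti := t) (xj := x)
    (tj := t) hc (half_pos hlam)
  rw [ouKernel_eq_mul_self]
  refine ⟨hint, heq.trans ?_⟩
  simp only [sub_self, abs_zero, mul_zero, zero_div, neg_zero, exp_zero, min_self]
  field_simp

section Moments

variable {α ι : Type*} [MeasurableSpace α] {ν : Measure α} {s : Finset ι}
  {g : ι → α → ℝ} {w : ι → ℝ} {h : α → ℝ}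

lemma integrable_and_integral_of_eq_sum_mul (hh : ∀ p, h p = ∑ i ∈ s, g i p * w i)
    (hg : ∀ i, Integrable (g i) ν) :
    Integrable h ν ∧ ∫ p, h p ∂ν = ∑ i ∈ s, (∫ p, g i p ∂ν) * w i := by
  rw [funext hh]
  refine ⟨integrable_finsetSum _ fun i _ => (hg i).mul_const _, ?_⟩
  rw [integral_finsetSum _ fun i _ => (hg i).mul_const _]
  simp_rw [integral_mul_const]

lemma integrable_and_integral_sq_of_eq_sum_mul (hh : ∀ p, h p = ∑ i ∈ s, g i p * w i)
    (hg : ∀ i j, Integrable (g i * g j) ν) :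
    Integrable (fun p => h p ^ 2) ν ∧
      ∫ p, h p ^ 2 ∂ν = ∑ i ∈ s, ∑ j ∈ s, (∫ p, (g i * g j) p ∂ν) * (w i * w j) := by
  have hsq : ∀ p, h p ^ 2 = ∑ ij ∈ s ×ˢ s, (g ij.1 * g ij.2) p * (w ij.1 * w ij.2) := by
    intro p
    rw [hh, sq, Finset.sum_mul_sum, Finset.sum_product]
    exact Finset.sum_congr rfl fun i _ => Finset.sum_congr rfl fun j _ => by
      rw [Pi.mul_apply]; ring
  obtain ⟨hint, heq⟩ := integrable_and_integral_of_eq_sum_mul hsq fun ij => hg ij.1 ij.2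
  exact ⟨hint, by rw [heq, Finset.sum_product]⟩

lemma integral_gaussianCGF (μ τ : ℝ) {u : α → ℝ} (h1 : Integrable u ν)
    (h2 : Integrable (fun p => u p ^ 2) ν) :
    ∫ p, (Complex.I * ((μ * u p : ℝ) : ℂ) - ((τ ^ 2 * u p ^ 2 / 2 : ℝ) : ℂ)) ∂ν
      = Complex.I * ((μ * ∫ p, u p ∂ν : ℝ) : ℂ) - ((τ ^ 2 / 2 * ∫ p, u p ^ 2 ∂ν : ℝ) : ℂ) := by
  have hexp : ∀ p, Complex.I * ((μ * u p : ℝ) : ℂ) - ((τ ^ 2 * u p ^ 2 / 2 : ℝ) : ℂ)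
      = Complex.I * μ * (u p : ℂ) - ((τ ^ 2 / 2 : ℝ) : ℂ) * ((u p ^ 2 : ℝ) : ℂ) :=
    fun p => by push_cast; ring
  simp_rw [hexp]
  rw [integral_sub (h1.ofReal.const_mul _) (h2.ofReal.const_mul _), integral_const_mul,
    integral_const_mul, integral_complex_ofReal, integral_complex_ofReal]
  push_cast
  ring

end Moments

section Sums

variable {ι : Type*} {s : Finset ι} {c lam : ℝ} {x t w : ι → ℝ} {u : ℝ × ℝ → ℝ}

lemma integrable_and_integral_of_eq_sum_ouKernel (hc : 0 < c) (hlam : 0 < lam)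
    (hu : ∀ p, u p = ∑ i ∈ s, ouKernel c lam (x i) (t i) p * w i) :
    Integrable u ∧ ∫ p, u p = 2 * c / lam ^ 2 * ∑ i ∈ s, w i := by
  obtain ⟨hint, heq⟩ := integrable_and_integral_of_eq_sum_mul hu
    fun i => (integrable_and_integral_ouKernel (x i) (t i) hc hlam).1
  refine ⟨hint, ?_⟩
  simp only [heq, (integrable_and_integral_ouKernel _ _ hc hlam).2, Finset.mul_sum]

lemma integrable_and_integral_sq_of_eq_sum_ouKernel (hc : 0 < c) (hlam : 0 < lam)
    (hu : ∀ p, u p = ∑ i ∈ s, ouKernel c lam (x i) (t i) p * w i) :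
    Integrable (fun p => u p ^ 2) ∧ ∫ p, u p ^ 2 = c / (2 * lam ^ 2) * ∑ i ∈ s, ∑ j ∈ s,
      w i * w j * min (exp (-(lam * |t i - t j|))) (exp (-(lam * |x i - x j| / c))) := by
  obtain ⟨hint, heq⟩ := integrable_and_integral_sq_of_eq_sum_mul hu
    fun i j => (integrable_and_integral_ouKernel_mul hc hlam).1
  refine ⟨hint, ?_⟩
  simp only [heq, (integrable_and_integral_ouKernel_mul hc hlam).2, Finset.mul_sum]
  exact Finset.sum_congr rfl fun i _ => Finset.sum_congr rfl fun j _ => by ring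

end Sums

/-- Joint cumulant generating function of n values of the canonical Gaussian OU∧ process:
`C{θ ‡ (Y_{t₁}(x₁),…,Y_{t_n}(x_n))} = i(2cμ/λ²) Σ θ̃ᵢ − (cτ²/(4λ²)) Σᵢⱼ θ̃ᵢθ̃ⱼ
min(e^{-λ|tᵢ-tⱼ|}, e^{-λ|xᵢ-xⱼ|/c})`, where the JCGF is `∫ C{θ h_A(ξ,s) ‡ L'} dξ ds`
with Gaussian seed CGF `C{u ‡ L'} = iμu − τ²u²/2`.  In particular the characteristic
function is that of a multivariate normal vector with mean `2cμ/λ²` and covariance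
`Σᵢⱼ = (cτ²/(2λ²)) min(e^{-λ|tᵢ-tⱼ|}, e^{-λ|xᵢ-xⱼ|/c})`. -/
theorem canonical_OUwedge_gaussian_JCGF
    (lam c μ τ θ : ℝ) (hlam : 0 < lam) (hc : 0 < c)
    (n : ℕ) (x t θv : Fin n → ℝ)
    (θt : Fin n → ℝ) (hθt : θt = fun i => θ * θv i)
    (A : Set (ℝ × ℝ)) (hA : A = {p : ℝ × ℝ | p.2 ≤ 0 ∧ |p.1| ≤ c * (-p.2)})
    (h : ℝ × ℝ → ℝ)
    (hh : h = fun p => ∑ i, Set.indicator A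
      (fun _ => Real.exp (-(lam * (t i - p.2)))) (p.1 - x i, p.2 - t i) * θv i) :
    (∫ p : ℝ × ℝ,
        (Complex.I * ((μ * (θ * h p) : ℝ) : ℂ) - ((τ ^ 2 * (θ * h p) ^ 2 / 2 : ℝ) : ℂ))
      = Complex.I * (((2 * c * μ / lam ^ 2) * ∑ i, θt i : ℝ) : ℂ)
        - (((c * τ ^ 2 / (4 * lam ^ 2)) * ∑ i, ∑ j, θt i * θt j *
            min (Real.exp (-(lam * |t i - t j|)))
                (Real.exp (-(lam * |x i - x j| / c))) : ℝ) : ℂ))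
    ∧ Complex.exp (∫ p : ℝ × ℝ,
        (Complex.I * ((μ * (θ * h p) : ℝ) : ℂ) - ((τ ^ 2 * (θ * h p) ^ 2 / 2 : ℝ) : ℂ)))
      = Complex.exp (Complex.I * (((2 * c * μ / lam ^ 2) * ∑ i, θt i : ℝ) : ℂ)
        - (((1 / 2) * ∑ i, ∑ j, θt i * θt j * ((c * τ ^ 2 / (2 * lam ^ 2)) *
            min (Real.exp (-(lam * |t i - t j|)))
                (Real.exp (-(lam * |x i - x j| / c)))) : ℝ) : ℂ)) := by
  have hu : ∀ p, θ * h p = ∑ i, ouKernel c lam (x i) (t i) p * θt i := fun p => by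
    subst hh hA hθt
    simp only [Finset.mul_sum]
    exact Finset.sum_congr rfl fun i _ => by rw [ouKernel]; ring
  obtain ⟨h1int, h1⟩ := integrable_and_integral_of_eq_sum_ouKernel hc hlam hu
  obtain ⟨h2int, h2⟩ := integrable_and_integral_sq_of_eq_sum_ouKernel hc hlam hu
  have hJ := integral_gaussianCGF μ τ (u := fun p => θ * h p) h1int h2int
  rw [h1, h2] at hJ
  simp only [mul_left_comm _ (c * τ ^ 2 / (2 * lam ^ 2)), ← Finset.mul_sum]
  rw [hJ]
  refine ⟨?_, congrArg Complex.exp ?_⟩ <;>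
    simp only [Complex.ofReal_mul, Complex.ofReal_div, Complex.ofReal_pow, Complex.ofReal_ofNat,
      Complex.ofReal_one] <;> ring
end

section
/- Let λ > 0 and μ, τ ∈ ℝ. For Δ > 0, define the rectangular-grid kernel discretisation limit (R → ∞) of the MSE for the canonical OU∧ process with c = 1: M(Δ) = (4μ²/λ⁴)(1 − [λ²Δ²/(1−e^{-λΔ})²]·[(1+e^{-λΔ})/2])² + τ²[ (2λ²)⁻¹(1 − (2(1−e^{-λΔ})/(λΔ) − 1)·4λ²Δ²e^{-2λΔ}/(1−e^{-2λΔ})²) + (e^{-λΔ}/λ² + Δ/(2λ) − (1−e^{-λΔ/2})·2/(λ³Δ))·2λΔ/(1−e^{-2λΔ}) ]. Then M(Δ) → 0 as Δ → 0⁺, and M(Δ) = O(Δ). -/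
open Real Filter Asymptotics Topology

/-! After the substitution `x = λΔ`, `M(Δ)` is a fixed linear combination of `f₁(x)²`, `f₂(x)`
and `f₃(x) f₄(x)` for four elementary functions with `f₁, f₂, f₃ = O(x)` as `x → 0⁺` and `f₄`
bounded. On `0 < x ≤ 1/4` each of these estimates follows from the sandwich
`1 - x ≤ e^{-x} ≤ 1 - x + x²`. -/

section

variable {x : ℝ}

lemma exp_neg_le_one_sub_add_sq (hx₀ : 0 ≤ x) (hx₁ : x ≤ 1) : exp (-x) ≤ 1 - x + x ^ 2 := by
  have h := abs_exp_sub_one_sub_id_le (x := -x) (by rwa [abs_neg, abs_of_nonneg hx₀])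
  linarith [(abs_le.1 h).2, neg_sq x]

lemma abs_one_sub_sq_div_mul_one_add_exp_neg_le (hx : 0 < x) (hx' : x ≤ 1 / 4) :
    |1 - x ^ 2 / (1 - exp (-x)) ^ 2 * ((1 + exp (-x)) / 2)| ≤ 4 * x := by
  set e := exp (-x)
  have h₁ : 1 - x ≤ e := one_sub_le_exp_neg x
  have h₂ : e ≤ 1 - x + x ^ 2 := exp_neg_le_one_sub_add_sq hx.le (by linarith)
  have hD : 0 < (1 - e) ^ 2 := pow_pos (by nlinarith) 2
  have hA₁ : 1 ≤ x ^ 2 / (1 - e) ^ 2 :=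
    (one_le_div hD).mpr (pow_le_pow_left₀ (by nlinarith) (by linarith) 2)
  have hA₂ : x ^ 2 / (1 - e) ^ 2 ≤ 1 + 4 * x := by
    have hsq : (x - x ^ 2) ^ 2 ≤ (1 - e) ^ 2 := pow_le_pow_left₀ (by nlinarith) (by linarith) 2
    have hpoly : 1 ≤ (1 + 4 * x) * (1 - x) ^ 2 := by nlinarith
    rw [div_le_iff₀ hD]
    nlinarith [mul_le_mul_of_nonneg_left hsq (by linarith : (0 : ℝ) ≤ 1 + 4 * x)]
  have hlo : 1 - x / 2 ≤ x ^ 2 / (1 - e) ^ 2 * ((1 + e) / 2) := by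
    have hB : 1 - x / 2 ≤ (1 + e) / 2 := by linarith
    nlinarith [mul_le_mul hA₁ hB (by linarith) (by linarith)]
  have hhi : x ^ 2 / (1 - e) ^ 2 * ((1 + e) / 2) ≤ 1 + 4 * x := by
    have hB : (1 + e) / 2 ≤ 1 := by nlinarith
    nlinarith [mul_le_mul hA₂ hB (by linarith) (by linarith)]
  rw [abs_le]
  constructor <;> linarith

lemma abs_one_sub_two_mul_one_sub_exp_neg_div_sub_one_mul_le (hx : 0 < x) (hx' : x ≤ 1 / 4) :
    |1 - (2 * (1 - exp (-x)) / x - 1) *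
        (4 * x ^ 2 * exp (-(2 * x)) / (1 - exp (-(2 * x))) ^ 2)| ≤ 12 * x := by
  set e := exp (-x)
  set e₂ := exp (-(2 * x))
  have h₁ : 1 - x ≤ e := one_sub_le_exp_neg x
  have h₂ : e ≤ 1 - x + x ^ 2 := exp_neg_le_one_sub_add_sq hx.le (by linarith)
  have h₁' : 1 - 2 * x ≤ e₂ := one_sub_le_exp_neg (2 * x)
  have h₂' : e₂ ≤ 1 - 2 * x + (2 * x) ^ 2 := exp_neg_le_one_sub_add_sq (by linarith) (by linarith)
  have hD : 0 < (1 - e₂) ^ 2 := pow_pos (by nlinarith) 2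
  have ha₁ : 1 - 2 * x ≤ 2 * (1 - e) / x - 1 := by
    rw [le_sub_iff_add_le, le_div_iff₀ hx]; nlinarith
  have ha₂ : 2 * (1 - e) / x - 1 ≤ 1 := by
    rw [sub_le_iff_le_add, div_le_iff₀ hx]; nlinarith
  have hb₁ : 1 - 2 * x ≤ 4 * x ^ 2 * e₂ / (1 - e₂) ^ 2 := by
    have : (1 - e₂) ^ 2 ≤ (2 * x) ^ 2 := pow_le_pow_left₀ (by nlinarith) (by linarith) 2
    rw [le_div_iff₀ hD]; nlinarith
  have hb₂ : 4 * x ^ 2 * e₂ / (1 - e₂) ^ 2 ≤ 1 + 12 * x := by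
    have : (2 * x - 4 * x ^ 2) ^ 2 ≤ (1 - e₂) ^ 2 :=
      pow_le_pow_left₀ (by nlinarith) (by linarith) 2
    have : e₂ ≤ (1 + 12 * x) * (1 - 2 * x) ^ 2 := by nlinarith
    rw [div_le_iff₀ hD]; nlinarith
  have hlo := mul_le_mul ha₁ hb₁ (by linarith) (by linarith)
  have hhi := mul_le_mul ha₂ hb₂ (by linarith) (by linarith)
  rw [abs_le]
  constructor <;> nlinarith

lemma abs_exp_neg_add_half_sub_one_sub_exp_neg_half_div_le (hx : 0 < x) (hx' : x ≤ 1 / 4) :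
    |exp (-x) + x / 2 - (1 - exp (-(x / 2))) / (x / 2)| ≤ x := by
  have h₁ : 1 - x ≤ exp (-x) := one_sub_le_exp_neg x
  have h₂ : exp (-x) ≤ 1 - x + x ^ 2 := exp_neg_le_one_sub_add_sq hx.le (by linarith)
  have h₂' : exp (-(x / 2)) ≤ 1 - x / 2 + (x / 2) ^ 2 :=
    exp_neg_le_one_sub_add_sq (by linarith) (by linarith)
  have hw₁ : 1 - x / 2 ≤ (1 - exp (-(x / 2))) / (x / 2) := by
    rw [le_div_iff₀ (by linarith)]; nlinarith
  have hw₂ : (1 - exp (-(x / 2))) / (x / 2) ≤ 1 := by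
    rw [div_le_one (by linarith)]; linarith [one_sub_le_exp_neg (x / 2)]
  rw [abs_le]
  constructor <;> nlinarith

end

lemma isBigO_two_mul_div_one_sub_exp_neg_two_mul :
    (fun x => 2 * x / (1 - exp (-(2 * x)))) =O[𝓝[>] 0] fun _ => (1 : ℝ) := by
  refine IsBigO.of_bound 2 <| eventually_of_mem (Ioc_mem_nhdsGT (by norm_num : (0 : ℝ) < 1 / 4))
    fun x ⟨hx, hx'⟩ => ?_
  have h₂ : exp (-(2 * x)) ≤ 1 - 2 * x + (2 * x) ^ 2 :=
    exp_neg_le_one_sub_add_sq (by linarith) (by linarith)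
  have hD : x ≤ 1 - exp (-(2 * x)) := by nlinarith
  rw [norm_one, mul_one, norm_of_nonneg (div_pos (by linarith) (by linarith)).le,
    div_le_iff₀ (by linarith)]
  linarith

lemma isBigO_id_nhdsGT_zero_of_abs_le {f : ℝ → ℝ} {C ε : ℝ} (hε : 0 < ε)
    (h : ∀ x, 0 < x → x ≤ ε → |f x| ≤ C * x) : f =O[𝓝[>] 0] id :=
  IsBigO.of_bound C <| eventually_of_mem (Ioc_mem_nhdsGT hε) fun x hx => by
    simpa [abs_of_pos hx.1] using h x hx.1 hx.2

/-- The infinite-truncation-range limit `M(Δ)` of the rectangular-grid MSE for the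
canonical OU∧ process with c = 1 tends to 0 as the grid size Δ → 0⁺, and `M(Δ) = O(Δ)`. -/
theorem RG_MSE_limit_tendsto_zero
    (lam μ τ : ℝ) (hlam : 0 < lam)
    (M : ℝ → ℝ)
    (hM : M = fun Δ =>
      (4 * μ ^ 2 / lam ^ 4) *
        (1 - (lam ^ 2 * Δ ^ 2 / (1 - Real.exp (-(lam * Δ))) ^ 2) *
          ((1 + Real.exp (-(lam * Δ))) / 2)) ^ 2
      + τ ^ 2 *
        ((2 * lam ^ 2)⁻¹ *
          (1 - (2 * (1 - Real.exp (-(lam * Δ))) / (lam * Δ) - 1) *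
            (4 * lam ^ 2 * Δ ^ 2 * Real.exp (-(2 * lam * Δ)) /
              (1 - Real.exp (-(2 * lam * Δ))) ^ 2))
        + (Real.exp (-(lam * Δ)) / lam ^ 2 + Δ / (2 * lam)
            - (1 - Real.exp (-(lam * Δ / 2))) / (lam ^ 2 * (lam * Δ / 2))) *
          (2 * lam * Δ / (1 - Real.exp (-(2 * lam * Δ)))))) :
    Tendsto M (nhdsWithin 0 (Set.Ioi 0)) (nhds 0)
    ∧ M =O[nhdsWithin 0 (Set.Ioi 0)] (fun Δ => Δ) := by
  have hscale : Tendsto (lam * ·) (𝓝[>] 0) (𝓝[>] 0) :=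
    tendsto_comap.mono_left (comap_mulLeft_nhdsGT_zero hlam).ge
  have hsq : (fun x : ℝ => x ^ 2) =O[𝓝[>] 0] id :=
    (isLittleO_pow_id one_lt_two).isBigO.mono nhdsWithin_le_nhds
  have hε : (0 : ℝ) < 1 / 4 := by norm_num
  have h₁ := ((isBigO_id_nhdsGT_zero_of_abs_le hε fun _ =>
    abs_one_sub_sq_div_mul_one_add_exp_neg_le).pow 2).trans hsq
  have h₂ := isBigO_id_nhdsGT_zero_of_abs_le hε fun _ =>
    abs_one_sub_two_mul_one_sub_exp_neg_div_sub_one_mul_le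
  have h₃ := isBigO_id_nhdsGT_zero_of_abs_le (C := 1) hε fun _ hx hx' =>
    (abs_exp_neg_add_half_sub_one_sub_exp_neg_half_div_le hx hx').trans_eq (one_mul _).symm
  have h₄ := isBigO_two_mul_div_one_sub_exp_neg_two_mul
  have h₃₄ := ((h₃.const_mul_left (lam ^ 2)⁻¹).mul h₄).congr_right fun _ => mul_one _
  have hN := (h₁.const_mul_left (4 * μ ^ 2 / lam ^ 4)).add
    (((h₂.const_mul_left (2 * lam ^ 2)⁻¹).add h₃₄).const_mul_left (τ ^ 2))
  have hO : M =O[𝓝[>] 0] fun Δ => Δ := by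
    refine ((hN.comp_tendsto hscale).trans (isBigO_const_mul_self lam id _)).congr_left fun Δ => ?_
    have hΔ : Δ / (2 * lam) = lam * Δ / 2 / lam ^ 2 := by field_simp
    simp only [hM, Function.comp_apply, hΔ]
    ring_nf
  exact ⟨hO.trans_tendsto (tendsto_id.mono_left nhdsWithin_le_nhds), hO⟩
end
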